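/- arXiv:2406.19935 — 5 statements merged into one kernel-verified Lean document; each statement's English description precedes it below -/
import Mathlib

section
/- Let A = R(x;σ,δ) be the skew Ore polynomial ring over R, where σ is a ring automorphism of R and δ is a locally nilpotent σ-derivation of R. Then for every a ∈ A and every k ∈ ℕ there exists a' ∈ A with xᵏ·a = a'·xᵏ; consequently the multiplicatively closed set X = {xᵏ : k ∈ ℕ} is a left Ore set of A, i.e., for every a ∈ A and every s ∈ X one has Xa ∩ As ≠ ∅. -/
/-!
STATEMENT 0. Let `A = R(x;σ,δ)` be the skew Ore polynomial ring over `R`, where `σ` is a noncomm_ring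
automorphism of `R` and `δ` is a locally nilpotent `σ`-derivation of `R`.  Then for every `a ∈ A`
and every `k ∈ ℕ` there exists `a' ∈ A` with `xᵏ·a = a'·xᵏ`; consequently the multiplicatively
closed set `X = {xᵏ : k ∈ ℕ}` is a left Ore set of `A`, i.e. for every `a ∈ A` and `s = xᵏ ∈ X`
one has `Xa ∩ As ≠ ∅`.

The skew Ore polynomial ring is axiomatized: `A` is a ring containing `R` (via `ι`), it is a free
left `R`-module with basis `{xᵏ : k ∈ ℕ}` (hypothesis `hbasis`), and multiplication is determined
by the rule `x·r = σ(r)·x + x·δ(r)·x` (hypothesis `hcomm`).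
-/

theorem skew_ore_powers_left_ore
    {R : Type*} [Ring R] (σ : R ≃+* R) (δ : R → R)
    (hδadd : ∀ r s : R, δ (r + s) = δ r + δ s)
    (hδmul : ∀ r s : R, δ (r * s) = σ r * δ s + δ r * s)
    (hδln : ∀ r : R, ∃ n : ℕ, 0 < n ∧ δ^[n] r = 0)
    {A : Type*} [Ring A] (ι : R →+* A) (x : A)
    (hbasis : Function.Bijective fun c : ℕ →₀ R => c.sum fun k r => ι r * x ^ k)
    (hcomm : ∀ r : R, x * ι r = ι (σ r) * x + x * ι (δ r) * x) :
    (∀ (a : A) (k : ℕ), ∃ a' : A, x ^ k * a = a' * x ^ k) ∧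
      ∀ (a : A) (k : ℕ), ∃ (j : ℕ) (b : A), x ^ j * a = b * x ^ k := by
  -- Step 1: commuting x past ι r, by induction on nilpotency degree
  have step1 : ∀ (n : ℕ) (r : R), δ^[n] r = 0 → ∃ b : A, x * ι r = b * x := by
    intro n
    induction n with
    | zero =>
      intro r hr
      simp only [Function.iterate_zero, id] at hr
      exact ⟨0, by simp [hr]⟩
    | succ n ih =>
      intro r hr
      have h' : δ^[n] (δ r) = 0 := by
        rw [← Function.iterate_succ_apply]; exact hr
      obtain ⟨b, hb⟩ := ih (δ r) h'
      refine ⟨ι (σ r) + b * x, ?_⟩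
      rw [hcomm r, hb]
      noncomm_ring
  have step1' : ∀ r : R, ∃ b : A, x * ι r = b * x := by
    intro r
    obtain ⟨n, _, hn⟩ := hδln r
    exact step1 n r hn
  -- Step 2: commuting x past monomials ι r * x^k
  have step2 : ∀ (k : ℕ) (r : R), ∃ b : A, x * (ι r * x ^ k) = b * x := by
    intro k r
    obtain ⟨b, hb⟩ := step1' r
    refine ⟨b * x ^ k, ?_⟩
    calc x * (ι r * x ^ k) = (x * ι r) * x ^ k := by noncomm_ring
      _ = b * x * x ^ k := by rw [hb]
      _ = b * (x * x ^ k) := by noncomm_ring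
      _ = b * (x ^ k * x) := by rw [← pow_succ, ← pow_succ']
      _ = b * x ^ k * x := by noncomm_ring
  -- Step 3: commuting x past any element
  have step3 : ∀ a : A, ∃ b : A, x * a = b * x := by
    intro a
    obtain ⟨c, hc⟩ := hbasis.2 a
    simp only at hc
    refine ⟨c.sum fun k r => Classical.choose (step2 k r), ?_⟩
    rw [← hc, Finsupp.mul_sum, Finsupp.sum_mul]
    exact Finsupp.sum_congr fun k _ => Classical.choose_spec (step2 k (c k))
  -- Step 4: commuting x^k
  have step4 : ∀ (a : A) (k : ℕ), ∃ a' : A, x ^ k * a = a' * x ^ k := by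
    intro a k
    induction k generalizing a with
    | zero => exact ⟨a, by simp⟩
    | succ k ih =>
      obtain ⟨b, hb⟩ := step3 a
      obtain ⟨c, hc⟩ := ih b
      refine ⟨c, ?_⟩
      rw [pow_succ, mul_assoc, hb, ← mul_assoc, hc, mul_assoc]
  exact ⟨step4, fun a k => ⟨k, (step4 a k).choose, (step4 a k).choose_spec⟩⟩
end

section
/- Let M be a completely (σ,δ)-compatible right R-module and N a submodule of M. If m ∈ M and a, b ∈ R satisfy mab ∈ N, then m·σ(δʲ(a))·δ(b) ∈ N and m·σⁱ(δ(a))·δʲ(b) ∈ N for all i, j ∈ ℕ; in particular m·a·δʲ(b) ∈ N and m·δʲ(a)·b ∈ N for all j ∈ ℕ. -/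
open MulOpposite

/-- A right `R`-module `M` (encoded as a module over `Rᵐᵒᵖ`, with `m·r := op r • m`) is
`(σ,δ)`-compatible if for all `m ∈ M`, `r ∈ R`: `mr = 0 ↔ mσ(r) = 0` and `mr = 0 → mδ(r) = 0`. -/
def SigmaDeltaCompatible (R : Type*) [Ring R] (σ δ : R → R)
    (M : Type*) [AddCommGroup M] [Module Rᵐᵒᵖ M] : Prop :=
  ∀ (m : M) (r : R),
    (op r • m = 0 ↔ op (σ r) • m = 0) ∧ (op r • m = 0 → op (δ r) • m = 0)

/-- `M` is completely `(σ,δ)`-compatible if `M/N` is `(σ,δ)`-compatible for every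
submodule `N` of `M`. -/
def CompletelySigmaDeltaCompatible (R : Type*) [Ring R] (σ δ : R → R)
    (M : Type*) [AddCommGroup M] [Module Rᵐᵒᵖ M] : Prop :=
  ∀ N : Submodule Rᵐᵒᵖ M, SigmaDeltaCompatible R σ δ (M ⧸ N)


section Aux

variable {R : Type*} [Ring R] (σ : R →+* R) (δ : R → R)
  {X : Type*} [AddCommGroup X] [Module Rᵐᵒᵖ X]

lemma op_mul_smul (r s : R) (x : X) : op (r * s) • x = op s • (op r • x) := by
  rw [op_mul, mul_smul]

variable (hc : ∀ (x : X) (r : R),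
    (op r • x = 0 ↔ op (σ r) • x = 0) ∧ (op r • x = 0 → op (δ r) • x = 0))

include hc

lemma sigma_left {c b : R} {x : X} (h : op (c * b) • x = 0) : op (σ c * b) • x = 0 := by
  have h1 : op (σ (c * b)) • x = 0 := (hc x (c * b)).1.mp h
  rw [map_mul, op_mul_smul] at h1
  rw [op_mul_smul]
  exact (hc (op (σ c) • x) b).1.mpr h1

lemma delta_right {c b : R} {x : X} (h : op (c * b) • x = 0) : op (c * δ b) • x = 0 := by
  rw [op_mul_smul] at h ⊢
  exact (hc (op c • x) b).2 h

variable (hδmul : ∀ r s : R, δ (r * s) = σ r * δ s + δ r * s)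
include hδmul

lemma delta_left {c b : R} {x : X} (h : op (c * b) • x = 0) : op (δ c * b) • x = 0 := by
  have h1 : op (δ (c * b)) • x = 0 := (hc x (c * b)).2 h
  rw [hδmul, op_add, add_smul] at h1
  have h2 : op (σ c * δ b) • x = 0 := delta_right σ δ hc (sigma_left σ δ hc h)
  rwa [h2, zero_add] at h1

end Aux

/-!
STATEMENT 4. Let `M` be a completely `(σ,δ)`-compatible right `R`-module and `N` a submodule of
`M`.  If `m ∈ M` and `a, b ∈ R` satisfy `mab ∈ N`, then `m·σ(δʲ(a))·δ(b) ∈ N` and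
`m·σⁱ(δ(a))·δʲ(b) ∈ N` for all `i, j ∈ ℕ`; in particular `m·a·δʲ(b) ∈ N` and `m·δʲ(a)·b ∈ N`
for all `j ∈ ℕ`.  (Here `m·c·d = op (c*d) • m`.)
-/

theorem completely_compatible_product_mem
    {R : Type*} [Ring R] (σ : R →+* R) (δ : R → R)
    (hδadd : ∀ r s : R, δ (r + s) = δ r + δ s)
    (hδmul : ∀ r s : R, δ (r * s) = σ r * δ s + δ r * s)
    {M : Type*} [AddCommGroup M] [Module Rᵐᵒᵖ M]
    (hcompat : CompletelySigmaDeltaCompatible R (⇑σ) δ M)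
    (N : Submodule Rᵐᵒᵖ M) (m : M) (a b : R)
    (hmab : op (a * b) • m ∈ N) :
    (∀ j : ℕ, op (σ (δ^[j] a) * δ b) • m ∈ N) ∧
    (∀ i j : ℕ, op ((⇑σ)^[i] (δ a) * δ^[j] b) • m ∈ N) ∧
    (∀ j : ℕ, op (a * δ^[j] b) • m ∈ N) ∧
    (∀ j : ℕ, op (δ^[j] a * b) • m ∈ N) := by
  classical
  set hc := hcompat N
  set x : M ⧸ N := Submodule.Quotient.mk m with hx
  have key : ∀ r : R, op r • m ∈ N ↔ op r • x = 0 := fun r => by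
    rw [hx, ← Submodule.Quotient.mk_smul, Submodule.Quotient.mk_eq_zero]
  have h0 : op (a * b) • x = 0 := (key _).mp hmab
  -- claim 4
  have c4 : ∀ j : ℕ, op (δ^[j] a * b) • x = 0 := by
    intro j
    induction j with
    | zero => exact h0
    | succ n ih =>
      rw [Function.iterate_succ_apply']
      exact delta_left σ δ hc hδmul ih
  -- claim 1
  have c1 : ∀ j : ℕ, op (σ (δ^[j] a) * δ b) • x = 0 := fun j =>
    delta_right σ δ hc (sigma_left σ δ hc (c4 j))
  -- claim 2
  have c2a : ∀ i : ℕ, op ((⇑σ)^[i] (δ a) * b) • x = 0 := by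
    intro i
    induction i with
    | zero => exact c4 1
    | succ n ih =>
      rw [Function.iterate_succ_apply']
      exact sigma_left σ δ hc ih
  have c2 : ∀ i j : ℕ, op ((⇑σ)^[i] (δ a) * δ^[j] b) • x = 0 := by
    intro i j
    induction j with
    | zero => exact c2a i
    | succ n ih =>
      rw [Function.iterate_succ_apply']
      exact delta_right σ δ hc ih
  -- claim 3
  have c3 : ∀ j : ℕ, op (a * δ^[j] b) • x = 0 := by
    intro j
    induction j with
    | zero => exact h0
    | succ n ih =>
      rw [Function.iterate_succ_apply']
      exact delta_right σ δ hc ih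
  exact ⟨fun j => (key _).mpr (c1 j), fun i j => (key _).mpr (c2 i j),
    fun j => (key _).mpr (c3 j), fun j => (key _).mpr (c4 j)⟩
end

section
/- Let M be a completely (σ,δ)-compatible right R-module and N a submodule of M. If m ∈ M and a, b ∈ R satisfy mab ∈ N or m·σ(a)·b ∈ N, then m·δ(a)·b ∈ N. -/
open MulOpposite

/-!
STATEMENT 5. Let `M` be a completely `(σ,δ)`-compatible right `R`-module and `N` a submodule of
`M`.  If `m ∈ M` and `a, b ∈ R` satisfy `mab ∈ N` or `m·σ(a)·b ∈ N`, then `m·δ(a)·b ∈ N`.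
(Here `m·c·d = op (c*d) • m`.)
-/

theorem completely_compatible_delta_product_mem
    {R : Type*} [Ring R] (σ : R →+* R) (δ : R → R)
    (hδadd : ∀ r s : R, δ (r + s) = δ r + δ s)
    (hδmul : ∀ r s : R, δ (r * s) = σ r * δ s + δ r * s)
    {M : Type*} [AddCommGroup M] [Module Rᵐᵒᵖ M]
    (hcompat : CompletelySigmaDeltaCompatible R (⇑σ) δ M)
    (N : Submodule Rᵐᵒᵖ M) (m : M) (a b : R)
    (h : op (a * b) • m ∈ N ∨ op (σ a * b) • m ∈ N) :
    op (δ a * b) • m ∈ N := by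
  have compat := hcompat N
  set x : M ⧸ N := Submodule.Quotient.mk m with hx
  have mem_iff : ∀ r : R, op r • m ∈ N ↔ op r • x = 0 := by
    intro r
    rw [hx, ← Submodule.Quotient.mk_smul, Submodule.Quotient.mk_eq_zero]
  -- Case 1 : from x·(ab) = 0 deduce the conclusion.
  have case1 : op (a * b) • x = 0 → op (δ a * b) • x = 0 := by
    intro hab
    have hσ : op (σ b) • (op (σ a) • x) = 0 := by
      have := (compat x (a * b)).1.mp hab
      rwa [map_mul, op_mul, mul_smul] at this
    have hb : op b • (op (σ a) • x) = 0 := (compat _ b).1.mpr hσ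
    have hδb : op (δ b) • (op (σ a) • x) = 0 := (compat _ b).2 hb
    have hδab : op (δ (a * b)) • x = 0 := (compat x (a * b)).2 hab
    rw [hδmul, op_add, add_smul, op_mul, mul_smul, hδb, zero_add] at hδab
    exact hδab
  -- Case 2 reduces to case 1.
  rw [mem_iff]
  rcases h with hab | hσab
  · exact case1 ((mem_iff _).mp hab)
  · have hb : op b • (op (σ a) • x) = 0 := by
      have := (mem_iff _).mp hσab
      rwa [op_mul, mul_smul] at this
    have hσb : op (σ b) • (op (σ a) • x) = 0 := (compat _ b).1.mp hb
    have hab : op (a * b) • x = 0 := by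
      apply (compat x (a * b)).1.mpr
      rwa [map_mul, op_mul, mul_smul]
    exact case1 hab
end

section
/- Let σ be a ring automorphism of R, δ a σ-derivation of R, and set σ' := σ⁻¹ and δ' := −δ∘σ⁻¹ (so δ' is a σ'-derivation of R). If M is a completely (σ,δ)-compatible right R-module, then M is completely (σ',δ')-compatible, i.e., for every submodule N of M and all m ∈ M, r ∈ R: mr ∈ N ⟺ m·σ⁻¹(r) ∈ N, and mr ∈ N ⟹ m·(−δ(σ⁻¹(r))) ∈ N. -/
open MulOpposite

/-!
STATEMENT 8. Let `σ` be a ring automorphism of `R`, `δ` a `σ`-derivation of `R`, and set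
`σ' := σ⁻¹`, `δ' := −δ∘σ⁻¹` (a `σ'`-derivation of `R`).  If `M` is a completely
`(σ,δ)`-compatible right `R`-module, then `M` is completely `(σ',δ')`-compatible, i.e. for every
submodule `N` of `M` and all `m ∈ M`, `r ∈ R`: `mr ∈ N ↔ m·σ⁻¹(r) ∈ N`, and
`mr ∈ N → m·(−δ(σ⁻¹(r))) ∈ N`.
-/

theorem completely_compatible_inverse
    {R : Type*} [Ring R] (σ : R ≃+* R) (δ : R → R)
    (hδadd : ∀ r s : R, δ (r + s) = δ r + δ s)
    (hδmul : ∀ r s : R, δ (r * s) = σ r * δ s + δ r * s)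
    {M : Type*} [AddCommGroup M] [Module Rᵐᵒᵖ M]
    (hcompat : CompletelySigmaDeltaCompatible R (⇑σ) δ M) :
    CompletelySigmaDeltaCompatible R (⇑σ.symm) (fun r => -δ (σ.symm r)) M ∧
      ∀ (N : Submodule Rᵐᵒᵖ M) (m : M) (r : R),
        (op r • m ∈ N ↔ op (σ.symm r) • m ∈ N) ∧
        (op r • m ∈ N → op (-δ (σ.symm r)) • m ∈ N) := by

  have key : CompletelySigmaDeltaCompatible R (⇑σ.symm) (fun r => -δ (σ.symm r)) M := by
    intro N m r
    obtain ⟨h1, h2⟩ := hcompat N m (σ.symm r)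
    rw [σ.apply_symm_apply] at h1
    constructor
    · exact h1.symm
    · intro hr
      have := h2 (h1.mpr hr)
      simpa using congrArg Neg.neg this
  refine ⟨key, fun N m r => ?_⟩
  obtain ⟨h1, h2⟩ := key N (Submodule.Quotient.mk m) r
  simp only [← Submodule.Quotient.mk_smul, Submodule.Quotient.mk_eq_zero] at h1 h2
  exact ⟨h1, h2⟩
end

section
/- Let S = R[x;σ] be the skew polynomial ring with σ a ring automorphism of R. If M is a completely σ-compatible right R-module, then Att(M[x⁻¹]_S) ⊇ { P[x] : P ∈ Att(M_R) }, i.e., for every attached prime P of the right R-module M, the ideal P[x] of polynomials with coefficients in P is an attached prime of the right S-module M[x⁻¹]. -/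
/-!
Let `P = ann(M/N)` with `M/N` coprime, and let `N[x⁻¹]` be the inverse polynomials with all
coefficients in `N`. Complete `σ`-compatibility makes the twists `σ⁻ⁱ` in the action invisible to
annihilators into `N`, so `ann_S(M[x⁻¹]/N[x⁻¹]) = P[x]`. Given a proper `S`-submodule
`L ⊇ N[x⁻¹]`, let `i₀` be the least degree such that `L` does not contain all of `M x⁻ⁱ⁰`. The
coefficients `m` with `m x⁻ⁱ⁰ ∈ L` form a proper `R`-submodule containing `N`, so its annihilator is
`P` by coprimality; acting by `t = ∑ cₖ xᵏ ∈ ann_S(M[x⁻¹]/L)` on `m x^{-(k+i₀)}`, the terms of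
degree `< k` lie in `N[x⁻¹]` by induction on `k` and those of degree `> k` land below `i₀`, hence
`cₖ ∈ P`. Thus `M[x⁻¹]/N[x⁻¹]` is coprime with annihilator `P[x]`, and the annihilator of a
coprime module is always prime.
-/

/- Right modules over a ring `T` are modules over `Tᵐᵒᵖ` (`m·t := op t • m`); the inverse
polynomial module `M[x⁻¹]` is `ℕ →₀ M`, the coefficient of `x⁻ⁱ` sitting at `i`. -/

open MulOpposite

/-- A prime ideal of a (possibly noncommutative) ring `T`, as a set: a proper two-sided ideal
`P` such that `aTb ⊆ P` implies `a ∈ P` or `b ∈ P`. -/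
def IsPrimeIdealSet (T : Type*) [Ring T] (P : Set T) : Prop :=
  (0 : T) ∈ P ∧ (∀ a ∈ P, ∀ b ∈ P, a + b ∈ P) ∧
    (∀ a ∈ P, ∀ t : T, t * a ∈ P ∧ a * t ∈ P) ∧ P ≠ Set.univ ∧
    ∀ a b : T, (∀ t : T, a * t * b ∈ P) → a ∈ P ∨ b ∈ P

/-- The annihilator of the quotient of the right `T`-module `L` by the subset `Nset`, that is
`{t : T | L·t ⊆ Nset}`. -/
def annIn (T : Type*) [Ring T] (L : Type*) [AddCommGroup L] [Module Tᵐᵒᵖ L]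
    (Nset : Set L) : Set T :=
  {t : T | ∀ l : L, op t • l ∈ Nset}

/-- The quotient `L/N` is a coprime right `T`-module: it is nonzero and
`ann_T(L/N) = ann_T((L/N)/(N'/N))` for every proper submodule `N'/N` of `L/N`; equivalently,
`ann_T(L/N) = ann_T(L/N')` for every submodule `N ≤ N' < L`. -/
def CoprimeQuot (T : Type*) [Ring T] (L : Type*) [AddCommGroup L] [Module Tᵐᵒᵖ L]
    (N : Submodule Tᵐᵒᵖ L) : Prop :=
  (∃ l : L, l ∉ N) ∧
    ∀ N' : Submodule Tᵐᵒᵖ L, N ≤ N' → N' ≠ ⊤ →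
      annIn T L (N : Set L) = annIn T L (N' : Set L)

/-- The set of attached prime ideals of the right `T`-module `L`: prime ideals of the form
`ann_T(L/N)` with `L/N` a coprime quotient of `L`. -/
def AttSet (T : Type*) [Ring T] (L : Type*) [AddCommGroup L] [Module Tᵐᵒᵖ L] : Set (Set T) :=
  {P | IsPrimeIdealSet T P ∧
    ∃ N : Submodule Tᵐᵒᵖ L, CoprimeQuot T L N ∧ P = annIn T L (N : Set L)}

/-- For an ideal `P` of `R`, `polyIn ι x P` is `P[x]`: the set of polynomials in `S` all of
whose coefficients lie in `P`. -/
def polyIn {R S : Type*} [Ring R] [Ring S] (ι : R →+* S) (x : S) (P : Set R) : Set S :=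
  {s : S | ∃ c : ℕ →₀ R, (∀ k, c k ∈ P) ∧ s = c.sum fun k r => ι r * x ^ k}

/-- `M` is completely `σ`-compatible: `M/N` is `σ`-compatible for every submodule `N`. -/
def CompletelySigmaCompatible (R : Type*) [Ring R] (σ : R → R)
    (M : Type*) [AddCommGroup M] [Module Rᵐᵒᵖ M] : Prop :=
  ∀ (N : Submodule Rᵐᵒᵖ M) (m : M ⧸ N) (r : R),
    op r • m = 0 ↔ op (σ r) • m = 0

open Finsupp

section Coprime

variable {T : Type*} [Ring T] {L : Type*} [AddCommGroup L] [Module Tᵐᵒᵖ L]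

theorem annIn_mono {A B : Set L} (h : A ⊆ B) : annIn T L A ⊆ annIn T L B :=
  fun _ ht l => h (ht l)

theorem CoprimeQuot.isPrimeIdealSet_annIn {N : Submodule Tᵐᵒᵖ L} (hN : CoprimeQuot T L N) :
    IsPrimeIdealSet T (annIn T L N) := by
  obtain ⟨⟨l₀, hl₀⟩, hann⟩ := hN
  refine ⟨fun l => by simp, fun a ha b hb l => by simpa [add_smul] using N.add_mem (ha l) (hb l),
    fun a ha t => ⟨fun l => by simpa [mul_smul] using ha (op t • l),
      fun l => by simpa [mul_smul] using N.smul_mem (op t) (ha l)⟩,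
    fun h => hl₀ (by simpa using (h ▸ Set.mem_univ (1 : T) : (1 : T) ∈ annIn T L N) l₀), ?_⟩
  intro a b hab
  -- `L·a ⊆ K`, so a proper `K` forces `a ∈ ann(L/K) = ann(L/N)` by coprimality
  let K : Submodule Tᵐᵒᵖ L :=
    { carrier := {l | ∀ t, op (t * b) • l ∈ N}
      add_mem' := fun hl hl' t => by simpa [smul_add] using N.add_mem (hl t) (hl' t)
      zero_mem' := fun t => by simp
      smul_mem' := fun s l hl t => by simpa [← mul_smul, mul_assoc] using hl (s.unop * t) }
  by_cases hK : K = ⊤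
  · right
    intro l
    simpa using (hK ▸ Submodule.mem_top : l ∈ K) 1
  · left
    rw [hann K (fun l hl t => N.smul_mem _ hl) hK]
    intro l t
    simpa [← mul_smul, mul_assoc] using hab t l

end Coprime

theorem CompletelySigmaCompatible.symm_iterate_smul_mem_iff {R : Type*} [Ring R] {σ : R ≃+* R}
    {M : Type*} [AddCommGroup M] [Module Rᵐᵒᵖ M] (h : CompletelySigmaCompatible R σ M)
    (N : Submodule Rᵐᵒᵖ M) (m : M) (n : ℕ) (r : R) :
    op ((⇑σ.symm)^[n] r) • m ∈ N ↔ op r • m ∈ N := by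
  induction n generalizing r with
  | zero => rfl
  | succ n ih =>
    rw [Function.iterate_succ_apply, ih, ← Submodule.Quotient.mk_eq_zero,
      ← Submodule.Quotient.mk_eq_zero, Submodule.Quotient.mk_smul, Submodule.Quotient.mk_smul,
      h N _ (σ.symm r), σ.apply_symm_apply]

section InversePolynomial

variable {R : Type*} [Ring R] {S : Type*} [Ring S]

def skewPolyOf (ι : R →+* S) (x : S) (c : ℕ →₀ R) : S := c.sum fun k r => ι r * x ^ k

def IsInversePolynomialAction (σ : R ≃+* R) (ι : R →+* S) (x : S) (M : Type*) [AddCommGroup M]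
    [Module Rᵐᵒᵖ M] [Module Sᵐᵒᵖ (ℕ →₀ M)] : Prop :=
  ∀ (m : M) (i : ℕ) (r : R) (j : ℕ),
    op (ι r * x ^ j) • single i m =
      if j ≤ i then single (i - j) (op ((⇑σ.symm)^[i] r) • m) else (0 : ℕ →₀ M)

variable {σ : R ≃+* R} {ι : R →+* S} {x : S}
variable {M : Type*} [AddCommGroup M] [Module Rᵐᵒᵖ M] [Module Sᵐᵒᵖ (ℕ →₀ M)]

theorem op_skewPolyOf_smul_single (hact : IsInversePolynomialAction σ ι x M) (c : ℕ →₀ R)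
    (n : ℕ) (m : M) :
    op (skewPolyOf ι x c) • single n m = ∑ k ∈ c.support,
      if k ≤ n then single (n - k) (op ((⇑σ.symm)^[n] (c k)) • m) else 0 := by
  rw [skewPolyOf, Finsupp.sum, Finset.op_sum, Finset.sum_smul]
  exact Finset.sum_congr rfl fun k _ => hact m n (c k) k

theorem op_skewPolyOf_smul_single_apply_zero (hact : IsInversePolynomialAction σ ι x M)
    (c : ℕ →₀ R) (k : ℕ) (m : M) :
    (op (skewPolyOf ι x c) • single k m) 0 = op ((⇑σ.symm)^[k] (c k)) • m := by
  classical
  rw [op_skewPolyOf_smul_single hact, Finset.sum_apply', Finset.sum_eq_single k]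
  · simp
  · intro j _ hjk
    split_ifs with hj
    · rw [single_apply, if_neg (by omega)]
    · rfl
  · intro hk
    rw [notMem_support_iff.mp hk, Function.iterate_fixed (map_zero σ.symm)]
    simp

theorem op_skewPolyOf_smul_apply_mem (hact : IsInversePolynomialAction σ ι x M)
    (N : Submodule Rᵐᵒᵖ M) (c : ℕ →₀ R) (f : ℕ →₀ M)
    (h : ∀ i k, op ((⇑σ.symm)^[i] (c k)) • f i ∈ N) (d : ℕ) :
    (op (skewPolyOf ι x c) • f) d ∈ N := by
  classical
  rw [← f.sum_single, Finsupp.sum, Finset.smul_sum, Finset.sum_apply']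
  refine N.sum_mem fun i _ => ?_
  rw [op_skewPolyOf_smul_single hact, Finset.sum_apply']
  refine N.sum_mem fun k _ => ?_
  split_ifs
  · rw [single_apply]
    split_ifs
    exacts [h i k, N.zero_mem]
  · exact N.zero_mem

/-- `N[x⁻¹]`: the inverse polynomials all of whose coefficients lie in `N`. -/
def invPolySubmodule (hact : IsInversePolynomialAction σ ι x M)
    (hsurj : Function.Surjective (skewPolyOf ι x)) (N : Submodule Rᵐᵒᵖ M) :
    Submodule Sᵐᵒᵖ (ℕ →₀ M) where
  carrier := {f | ∀ i, f i ∈ N}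
  add_mem' hf hg i := N.add_mem (hf i) (hg i)
  zero_mem' _ := N.zero_mem
  smul_mem' s f hf := by
    obtain ⟨c, hc⟩ := hsurj s.unop
    rw [← op_unop s, ← hc]
    exact op_skewPolyOf_smul_apply_mem hact N c f fun i k => N.smul_mem _ (hf i)

theorem single_mem_invPolySubmodule (hact : IsInversePolynomialAction σ ι x M)
    (hsurj : Function.Surjective (skewPolyOf ι x)) {N : Submodule Rᵐᵒᵖ M} (d : ℕ) {m : M}
    (hm : m ∈ N) : single d m ∈ invPolySubmodule hact hsurj N := by
  intro i
  rw [single_apply]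
  split_ifs
  exacts [hm, N.zero_mem]

theorem annIn_invPolySubmodule (hact : IsInversePolynomialAction σ ι x M)
    (hsurj : Function.Surjective (skewPolyOf ι x)) (hcompat : CompletelySigmaCompatible R σ M)
    (N : Submodule Rᵐᵒᵖ M) :
    annIn S (ℕ →₀ M) (invPolySubmodule hact hsurj N) = polyIn ι x (annIn R M N) := by
  ext s
  obtain ⟨c, rfl⟩ := hsurj s
  refine ⟨fun hs => ⟨c, fun k m => ?_, rfl⟩, ?_⟩
  · have := hs (single k m) 0
    rwa [op_skewPolyOf_smul_single_apply_zero hact,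
      hcompat.symm_iterate_smul_mem_iff] at this
  · rintro ⟨c', hc', hcc'⟩ f
    rw [show skewPolyOf ι x c = skewPolyOf ι x c' from hcc']
    exact op_skewPolyOf_smul_apply_mem hact N c' f fun i k =>
      (hcompat.symm_iterate_smul_mem_iff N (f i) i (c' k)).mpr (hc' k (f i))

def coeffSubmodule (hact : IsInversePolynomialAction σ ι x M) (L : Submodule Sᵐᵒᵖ (ℕ →₀ M))
    (d : ℕ) : Submodule Rᵐᵒᵖ M where
  carrier := {m | single d m ∈ L}
  add_mem' {m m'} hm hm' := by
    show single d (m + m') ∈ L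
    simpa only [single_add] using L.add_mem hm hm'
  zero_mem' := by simp
  smul_mem' r m hm := by
    -- `(m x⁻ᵈ)·ι(σᵈ r) = (m·r) x⁻ᵈ`
    have h := hact m d ((⇑σ)^[d] r.unop) 0
    rw [if_pos (Nat.zero_le d), pow_zero, mul_one, Nat.sub_zero,
      Function.LeftInverse.iterate σ.symm_apply_apply, op_unop] at h
    show single d (r • m) ∈ L
    simpa only [← h] using L.smul_mem _ hm

theorem exists_minimal_proper_coeffSubmodule (hact : IsInversePolynomialAction σ ι x M)
    {L : Submodule Sᵐᵒᵖ (ℕ →₀ M)} (hL : L ≠ ⊤) :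
    ∃ i₀, coeffSubmodule hact L i₀ ≠ ⊤ ∧ ∀ d < i₀, ∀ m, single d m ∈ L := by
  classical
  have hex : ∃ d, coeffSubmodule hact L d ≠ ⊤ := by
    by_contra! h
    refine hL (L.eq_top_iff'.mpr fun f => ?_)
    rw [← f.sum_single]
    exact L.sum_mem fun i _ => show f i ∈ coeffSubmodule hact L i by simp [h i]
  refine ⟨Nat.find hex, Nat.find_spec hex, fun d hd m => ?_⟩
  show m ∈ coeffSubmodule hact L d
  simp [not_not.mp (Nat.find_min hex hd)]

theorem single_mem_of_op_skewPolyOf_smul_single_mem (hact : IsInversePolynomialAction σ ι x M)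
    (L : Submodule Sᵐᵒᵖ (ℕ →₀ M)) (c : ℕ →₀ R) {n k : ℕ} (hk : k ≤ n) (m : M)
    (h : op (skewPolyOf ι x c) • single n m ∈ L)
    (hother : ∀ j ≠ k, j ≤ n → single (n - j) (op ((⇑σ.symm)^[n] (c j)) • m) ∈ L) :
    single (n - k) (op ((⇑σ.symm)^[n] (c k)) • m) ∈ L := by
  classical
  by_cases hck : k ∈ c.support
  · rw [op_skewPolyOf_smul_single hact, ← Finset.add_sum_erase _ _ hck, if_pos hk] at h
    refine (L.add_mem_iff_left (L.sum_mem fun j hj => ?_)).mp h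
    split_ifs with hjn
    exacts [hother j (Finset.ne_of_mem_erase hj) hjn, L.zero_mem]
  · rw [notMem_support_iff.mp hck, Function.iterate_fixed (map_zero σ.symm)]
    simp

theorem annIn_subset_polyIn_of_le (hact : IsInversePolynomialAction σ ι x M)
    (hsurj : Function.Surjective (skewPolyOf ι x)) (hcompat : CompletelySigmaCompatible R σ M)
    {N : Submodule Rᵐᵒᵖ M} (hN : CoprimeQuot R M N) {L : Submodule Sᵐᵒᵖ (ℕ →₀ M)}
    (hNL : invPolySubmodule hact hsurj N ≤ L) (hL : L ≠ ⊤) :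
    annIn S (ℕ →₀ M) L ⊆ polyIn ι x (annIn R M N) := by
  intro t ht
  obtain ⟨c, rfl⟩ := hsurj t
  obtain ⟨i₀, hi₀, hbelow⟩ := exists_minimal_proper_coeffSubmodule hact hL
  have hann : annIn R M (coeffSubmodule hact L i₀) = annIn R M N :=
    (hN.2 _ (fun m hm => hNL (single_mem_invPolySubmodule hact hsurj i₀ hm)) hi₀).symm
  refine ⟨c, fun k => ?_, rfl⟩
  induction k using Nat.strong_induction_on with
  | _ k ih =>
    have hk : (⇑σ.symm)^[k + i₀] (c k) ∈ annIn R M (coeffSubmodule hact L i₀) := fun m => by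
      have hother : ∀ j ≠ k, j ≤ k + i₀ →
          single (k + i₀ - j) (op ((⇑σ.symm)^[k + i₀] (c j)) • m) ∈ L := by
        intro j hjk _
        rcases lt_or_gt_of_ne hjk with hj | hj
        · exact hNL (single_mem_invPolySubmodule hact hsurj _
            ((hcompat.symm_iterate_smul_mem_iff N m _ _).mpr (ih j hj m)))
        · exact hbelow _ (by omega) _
      have := single_mem_of_op_skewPolyOf_smul_single_mem hact L c (Nat.le_add_right k i₀) m
        (ht _) hother
      rwa [Nat.add_sub_cancel_left] at this
    rw [hann] at hk
    exact fun m => (hcompat.symm_iterate_smul_mem_iff N m _ _).mp (hk m)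

theorem coprimeQuot_invPolySubmodule (hact : IsInversePolynomialAction σ ι x M)
    (hsurj : Function.Surjective (skewPolyOf ι x)) (hcompat : CompletelySigmaCompatible R σ M)
    {N : Submodule Rᵐᵒᵖ M} (hN : CoprimeQuot R M N) :
    CoprimeQuot S (ℕ →₀ M) (invPolySubmodule hact hsurj N) := by
  refine ⟨?_, fun L hNL hL => (annIn_mono hNL).antisymm ?_⟩
  · obtain ⟨l, hl⟩ := hN.1
    exact ⟨single 0 l, fun h => hl (by simpa using h 0)⟩
  · rw [annIn_invPolySubmodule hact hsurj hcompat N]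
    exact annIn_subset_polyIn_of_le hact hsurj hcompat hN hNL hL

end InversePolynomial

theorem attached_primes_inverse_polynomial_skew_superset_general
    {R : Type*} [Ring R] (σ : R ≃+* R)
    {S : Type*} [Ring S] (ι : R →+* S) (x : S)
    (hbasis : Function.Bijective fun c : ℕ →₀ R => c.sum fun k r => ι r * x ^ k)
    {M : Type*} [AddCommGroup M] [Module Rᵐᵒᵖ M]
    [Module Sᵐᵒᵖ (ℕ →₀ M)]
    (hact : ∀ (m : M) (i : ℕ) (r : R) (j : ℕ),
      op (ι r * x ^ j) • Finsupp.single i m =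
        if j ≤ i then Finsupp.single (i - j) (op ((⇑σ.symm)^[i] r) • m)
        else (0 : ℕ →₀ M))
    (hcompat : CompletelySigmaCompatible R (⇑σ) M) :
    ∀ P ∈ AttSet R M, polyIn ι x P ∈ AttSet S (ℕ →₀ M) := by
  rintro _ ⟨-, N, hN, rfl⟩
  have hcop := coprimeQuot_invPolySubmodule hact hbasis.2 hcompat hN
  rw [← annIn_invPolySubmodule hact hbasis.2 hcompat N]
  exact ⟨hcop.isPrimeIdealSet_annIn, _, hcop, rfl⟩

theorem attached_primes_inverse_polynomial_skew_superset
    {R : Type*} [Ring R] (σ : R ≃+* R)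
    {S : Type*} [Ring S] (ι : R →+* S) (x : S)
    (hbasis : Function.Bijective fun c : ℕ →₀ R => c.sum fun k r => ι r * x ^ k)
    (hcomm : ∀ r : R, x * ι r = ι (σ r) * x)
    {M : Type*} [AddCommGroup M] [Module Rᵐᵒᵖ M]
    [Module Sᵐᵒᵖ (ℕ →₀ M)]
    (hact : ∀ (m : M) (i : ℕ) (r : R) (j : ℕ),
      op (ι r * x ^ j) • Finsupp.single i m =
        if j ≤ i then Finsupp.single (i - j) (op ((⇑σ.symm)^[i] r) • m)
        else (0 : ℕ →₀ M))
    (hcompat : CompletelySigmaCompatible R (⇑σ) M) :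
    ∀ P ∈ AttSet R M, polyIn ι x P ∈ AttSet S (ℕ →₀ M) :=
  attached_primes_inverse_polynomial_skew_superset_general σ ι x hbasis hact hcompat
end
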